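/- Let x ≥ 1 be real, let Q > √(2x), and let (a_n)_{n ≤ x} be a real sequence. Then Σ_{Q/2 < q ≤ Q} Σ_{1 ≤ a ≤ q} ( Σ_{n ≤ x, n ≡ a (mod q)} a_n )² = #{q ∈ ℕ : Q/2 < q ≤ Q} · Σ_{n ≤ x} a_n² + 2 Σ_{1 ≤ r ≤ 2x/Q} Σ_{n₂ < n₁ ≤ x, r | (n₁−n₂), Q/2 < (n₁−n₂)/r ≤ Q} a_{n₁} a_{n₂}, as an exact identity (this is Hooley's divisor switching: the modulus q is replaced by the complementary divisor r = (n₁−n₂)/q ≤ 2x/Q). -/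
import Mathlib


open scoped Classical

/-- `𝒜(z;q,b) := Σ_{n ≤ z, n ≡ b (mod q)} a_n`, for a real sequence `a`. -/
noncomputable def seqSum (a : ℕ → ℝ) (z : ℝ) (q b : ℕ) : ℝ :=
  ∑ n ∈ (Finset.Icc 1 ⌊z⌋₊).filter (fun n => n % q = b % q), a n

-- squared sum as product sum
lemma sq_sum_aux (t : Finset ℕ) (a : ℕ → ℝ) :
    (∑ n ∈ t, a n) ^ 2 = ∑ p ∈ t ×ˢ t, a p.1 * a p.2 := by
  rw [sq, Finset.sum_mul_sum, ← Finset.sum_product']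

-- reindex residues
lemma resum_aux (q : ℕ) (hq : 1 ≤ q) (f : ℕ → ℝ) :
    ∑ b ∈ Finset.Icc 1 q, f (b % q) = ∑ c ∈ Finset.range q, f c := by
  apply Finset.sum_nbij' (i := fun b => b % q) (j := fun c => if c = 0 then q else c)
  · intro b hb
    simp only [Finset.mem_range]
    exact Nat.mod_lt _ (by omega)
  · intro c hc
    simp only [Finset.mem_range] at hc
    simp only [Finset.mem_Icc]
    split <;> omega
  · intro b hb
    simp only [Finset.mem_Icc] at hb
    rcases eq_or_lt_of_le hb.2 with h | h
    · subst h; simp [Nat.mod_self]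
    · rw [Nat.mod_eq_of_lt h]; have : b ≠ 0 := by omega
      simp [this]
  · intro c hc
    simp only [Finset.mem_range] at hc
    split
    · simp [Nat.mod_self]; omega
    · exact Nat.mod_eq_of_lt hc
  · intro b hb; rfl

-- main per-modulus lemma
lemma per_q (q : ℕ) (hq : 1 ≤ q) (S : Finset ℕ) (a : ℕ → ℝ) :
    ∑ b ∈ Finset.Icc 1 q, (∑ n ∈ S.filter (fun n => n % q = b % q), a n) ^ 2
      = (∑ n ∈ S, a n ^ 2)
        + 2 * ∑ p ∈ (S ×ˢ S).filter (fun p : ℕ × ℕ => p.2 < p.1 ∧ q ∣ (p.1 - p.2)),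
            a p.1 * a p.2 := by
  have step1 : ∑ b ∈ Finset.Icc 1 q, (∑ n ∈ S.filter (fun n => n % q = b % q), a n) ^ 2
      = ∑ c ∈ Finset.range q, (∑ n ∈ S.filter (fun n => n % q = c), a n) ^ 2 := by
    have := resum_aux q hq (fun c => (∑ n ∈ S.filter (fun n => n % q = c), a n) ^ 2)
    simpa using this
  rw [step1]
  -- expand squares
  have step2 : ∀ c, (∑ n ∈ S.filter (fun n => n % q = c), a n) ^ 2
      = ∑ p ∈ ((S ×ˢ S).filter (fun p : ℕ × ℕ => p.1 % q = p.2 % q)).filter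
          (fun p => p.1 % q = c), a p.1 * a p.2 := by
    intro c
    rw [sq_sum_aux]
    congr 1
    ext p
    simp only [Finset.mem_product, Finset.mem_filter]
    constructor
    · rintro ⟨⟨h1, hc1⟩, h2, hc2⟩
      exact ⟨⟨⟨h1, h2⟩, by rw [hc1, hc2]⟩, hc1⟩
    · rintro ⟨⟨⟨h1, h2⟩, he⟩, hc⟩
      exact ⟨⟨h1, hc⟩, h2, by rw [← he]; exact hc⟩
  simp only [step2]
  rw [Finset.sum_fiberwise_of_maps_to (fun p hp => by
    simp only [Finset.mem_range]
    simp only [Finset.mem_filter, Finset.mem_product] at hp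
    exact Nat.mod_lt _ (by omega))]
  set P := (S ×ˢ S).filter (fun p : ℕ × ℕ => p.1 % q = p.2 % q) with hP
  -- trichotomy split
  rw [← Finset.sum_filter_add_sum_filter_not P (fun p => p.1 = p.2)]
  have hdiag : ∑ p ∈ P.filter (fun p => p.1 = p.2), a p.1 * a p.2 = ∑ n ∈ S, a n ^ 2 := by
    apply Finset.sum_nbij' (i := fun p : ℕ × ℕ => p.1) (j := fun n => (n, n))
    · intro p hp
      simp only [hP, Finset.mem_filter, Finset.mem_product] at hp
      exact hp.1.1.1
    · intro n hn
      simp [hP, Finset.mem_filter, Finset.mem_product, hn]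
    · intro p hp
      simp only [hP, Finset.mem_filter] at hp
      exact Prod.ext rfl hp.2
    · intro n hn; rfl
    · intro p hp
      simp only [hP, Finset.mem_filter] at hp
      rw [sq, ← hp.2]
  rw [hdiag]
  congr 1
  rw [← Finset.sum_filter_add_sum_filter_not (P.filter (fun p => ¬ p.1 = p.2))
    (fun p => p.2 < p.1)]
  have hset1 : (P.filter (fun p => ¬ p.1 = p.2)).filter (fun p => p.2 < p.1)
      = P.filter (fun p => p.2 < p.1) := by
    ext p; simp only [Finset.mem_filter]; constructor
    · rintro ⟨⟨h1, _⟩, h2⟩; exact ⟨h1, h2⟩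
    · rintro ⟨h1, h2⟩; exact ⟨⟨h1, by omega⟩, h2⟩
  have hset2 : (P.filter (fun p => ¬ p.1 = p.2)).filter (fun p => ¬ p.2 < p.1)
      = P.filter (fun p => p.1 < p.2) := by
    ext p; simp only [Finset.mem_filter]; constructor
    · rintro ⟨⟨h1, h2⟩, h3⟩; exact ⟨h1, by omega⟩
    · rintro ⟨h1, h2⟩; exact ⟨⟨h1, by omega⟩, by omega⟩
  rw [hset1, hset2]
  have hswap : ∑ p ∈ P.filter (fun p => p.1 < p.2), a p.1 * a p.2
      = ∑ p ∈ P.filter (fun p => p.2 < p.1), a p.1 * a p.2 := by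
    apply Finset.sum_nbij' (i := fun p : ℕ × ℕ => (p.2, p.1)) (j := fun p : ℕ × ℕ => (p.2, p.1))
    · intro p hp
      simp only [hP, Finset.mem_filter, Finset.mem_product] at hp ⊢
      exact ⟨⟨⟨hp.1.1.2, hp.1.1.1⟩, hp.1.2.symm⟩, hp.2⟩
    · intro p hp
      simp only [hP, Finset.mem_filter, Finset.mem_product] at hp ⊢
      exact ⟨⟨⟨hp.1.1.2, hp.1.1.1⟩, hp.1.2.symm⟩, hp.2⟩
    · intro p hp; rfl
    · intro p hp; rfl
    · intro p hp; exact mul_comm _ _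
  have hfin : P.filter (fun p => p.2 < p.1)
      = (S ×ˢ S).filter (fun p : ℕ × ℕ => p.2 < p.1 ∧ q ∣ (p.1 - p.2)) := by
    ext p
    simp only [hP, Finset.mem_filter, Finset.mem_product]
    constructor
    · rintro ⟨⟨hs, hm⟩, hlt⟩
      refine ⟨hs, hlt, ?_⟩
      exact (Nat.modEq_iff_dvd' hlt.le).mp hm.symm
    · rintro ⟨hs, hlt, hdvd⟩
      refine ⟨⟨hs, ?_⟩, hlt⟩
      exact ((Nat.modEq_iff_dvd' hlt.le).mpr hdvd).symm
  rw [hswap, hfin, two_mul]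

lemma switch_aux (x Q : ℝ) (hx : 1 ≤ x) (hQ0 : 0 < Q) (a : ℕ → ℝ) :
    ∑ q ∈ Finset.Ioc ⌊Q / 2⌋₊ ⌊Q⌋₊,
        ∑ p ∈ ((Finset.Icc 1 ⌊x⌋₊ ×ˢ Finset.Icc 1 ⌊x⌋₊).filter
          (fun p : ℕ × ℕ => p.2 < p.1 ∧ q ∣ (p.1 - p.2))), a p.1 * a p.2
      = ∑ r ∈ Finset.Icc 1 ⌊2 * x / Q⌋₊,
          ∑ p ∈ ((Finset.Icc 1 ⌊x⌋₊ ×ˢ Finset.Icc 1 ⌊x⌋₊).filter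
            (fun p : ℕ × ℕ => p.2 < p.1 ∧ r ∣ (p.1 - p.2) ∧
              Q / 2 < (((p.1 - p.2) / r : ℕ) : ℝ) ∧ (((p.1 - p.2) / r : ℕ) : ℝ) ≤ Q)),
            a p.1 * a p.2 := by
  have hx0 : (0:ℝ) ≤ x := le_trans zero_le_one hx
  have hQ20 : (0:ℝ) ≤ Q / 2 := by positivity
  rw [Finset.sum_sigma', Finset.sum_sigma']
  apply Finset.sum_nbij' (i := fun z : Σ _ : ℕ, ℕ × ℕ => ⟨(z.2.1 - z.2.2) / z.1, z.2⟩)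
    (j := fun z : Σ _ : ℕ, ℕ × ℕ => ⟨(z.2.1 - z.2.2) / z.1, z.2⟩)
  · rintro ⟨q, p⟩ hz
    simp only [Finset.mem_sigma, Finset.mem_Ioc, Finset.mem_filter, Finset.mem_product,
      Finset.mem_Icc] at hz ⊢
    obtain ⟨⟨hql, hqu⟩, ⟨hp1, hp2⟩, hlt, hdvd⟩ := hz
    set d := p.1 - p.2 with hd
    have hd1 : 1 ≤ d := by omega
    have hQ2q : Q / 2 < (q : ℝ) := (Nat.floor_lt hQ20).mp hql
    have hqQ : (q : ℝ) ≤ Q :=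
      le_trans (Nat.cast_le.mpr hqu) (Nat.floor_le hQ0.le)
    have hq1 : 1 ≤ q := by
      by_contra h
      push_neg at h
      interval_cases q
      · simp at hQ2q; linarith
    have hrq : (d / q) * q = d := Nat.div_mul_cancel hdvd
    have hr1 : 1 ≤ d / q := by
      have := Nat.le_of_dvd (by omega) hdvd
      exact Nat.one_le_div_iff (by omega) |>.mpr this
    have hdx : (d : ℝ) ≤ x := by
      have : (d : ℝ) ≤ (⌊x⌋₊ : ℝ) := by exact_mod_cast by omega
      exact le_trans this (Nat.floor_le hx0)
    have hrR : (d / q : ℕ) ≤ ⌊2 * x / Q⌋₊ := by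
      apply Nat.le_floor
      rw [le_div_iff₀ hQ0]
      have h1 : ((d / q : ℕ) : ℝ) * (Q / 2) < ((d / q : ℕ) : ℝ) * q := by
        apply mul_lt_mul_of_pos_left hQ2q
        exact_mod_cast hr1
      have h2 : ((d / q : ℕ) : ℝ) * q = d := by exact_mod_cast hrq
      nlinarith
    have hdq : d / (d / q) = q := Nat.div_div_self hdvd (by omega)
    refine ⟨⟨hr1, hrR⟩, ⟨hp1, hp2⟩, hlt, ⟨q, hrq.symm⟩, ?_, ?_⟩
    · rw [hdq]; exact hQ2q
    · rw [hdq]; exact hqQ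
  · rintro ⟨r, p⟩ hz
    simp only [Finset.mem_sigma, Finset.mem_Ioc, Finset.mem_filter, Finset.mem_product,
      Finset.mem_Icc] at hz ⊢
    obtain ⟨⟨hr1, hrR⟩, ⟨hp1, hp2⟩, hlt, hdvd, hq2, hqQ⟩ := hz
    set d := p.1 - p.2 with hd
    set q := d / r with hq
    have hqr : q * r = d := Nat.div_mul_cancel hdvd
    have hq1 : 1 ≤ q := by
      by_contra h
      push_neg at h
      interval_cases q
      · simp at hq2; linarith
    refine ⟨⟨(Nat.floor_lt hQ20).mpr hq2, Nat.le_floor hqQ⟩, ⟨hp1, hp2⟩, hlt, ⟨r, hqr.symm⟩⟩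
  · rintro ⟨q, p⟩ hz
    simp only [Finset.mem_sigma, Finset.mem_Ioc, Finset.mem_filter, Finset.mem_product,
      Finset.mem_Icc] at hz
    obtain ⟨⟨hql, hqu⟩, ⟨hp1, hp2⟩, hlt, hdvd⟩ := hz
    have hq1 : 1 ≤ q := by omega
    have h : (p.1 - p.2) / ((p.1 - p.2) / q) = q :=
      Nat.div_div_self hdvd (by omega)
    simp only [h]
  · rintro ⟨r, p⟩ hz
    simp only [Finset.mem_sigma, Finset.mem_Ioc, Finset.mem_filter, Finset.mem_product,
      Finset.mem_Icc] at hz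
    obtain ⟨⟨hr1, hrR⟩, ⟨hp1, hp2⟩, hlt, hdvd, hq2, hqQ⟩ := hz
    have h : (p.1 - p.2) / ((p.1 - p.2) / r) = r :=
      Nat.div_div_self hdvd (by omega)
    simp only [h]
  · rintro ⟨q, p⟩ hz; rfl

/-- Hooley's divisor switching identity: for `x ≥ 1`, `Q > √(2x)` and a real sequence
`(a_n)_{n ≤ x}`,
`Σ_{Q/2 < q ≤ Q} Σ_{1 ≤ b ≤ q} (Σ_{n ≤ x, n ≡ b (mod q)} a_n)²
  = #{q : Q/2 < q ≤ Q} Σ_{n ≤ x} a_n²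
    + 2 Σ_{1 ≤ r ≤ 2x/Q} Σ_{n₂ < n₁ ≤ x, r ∣ n₁−n₂, Q/2 < (n₁−n₂)/r ≤ Q} a_{n₁} a_{n₂}`,
as an exact identity (the modulus `q` is replaced by the complementary divisor
`r = (n₁−n₂)/q ≤ 2x/Q`). -/
theorem statement_8 (x Q : ℝ) (hx : 1 ≤ x) (hQ : Real.sqrt (2 * x) < Q) (a : ℕ → ℝ) :
    ∑ q ∈ Finset.Ioc ⌊Q / 2⌋₊ ⌊Q⌋₊, ∑ b ∈ Finset.Icc 1 q, (seqSum a x q b) ^ 2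
      = ((Finset.Ioc ⌊Q / 2⌋₊ ⌊Q⌋₊).card : ℝ) * ∑ n ∈ Finset.Icc 1 ⌊x⌋₊, (a n) ^ 2
        + 2 * ∑ r ∈ Finset.Icc 1 ⌊2 * x / Q⌋₊,
            ∑ p ∈ ((Finset.Icc 1 ⌊x⌋₊ ×ˢ Finset.Icc 1 ⌊x⌋₊).filter
              (fun p : ℕ × ℕ => p.2 < p.1 ∧ r ∣ (p.1 - p.2) ∧
                Q / 2 < (((p.1 - p.2) / r : ℕ) : ℝ) ∧ (((p.1 - p.2) / r : ℕ) : ℝ) ≤ Q)),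
              a p.1 * a p.2 := by
  have hQ0 : 0 < Q := lt_of_le_of_lt (Real.sqrt_nonneg _) hQ
  have hstep : ∀ q ∈ Finset.Ioc ⌊Q / 2⌋₊ ⌊Q⌋₊,
      ∑ b ∈ Finset.Icc 1 q, (seqSum a x q b) ^ 2
        = (∑ n ∈ Finset.Icc 1 ⌊x⌋₊, a n ^ 2)
          + 2 * ∑ p ∈ ((Finset.Icc 1 ⌊x⌋₊ ×ˢ Finset.Icc 1 ⌊x⌋₊).filter
              (fun p : ℕ × ℕ => p.2 < p.1 ∧ q ∣ (p.1 - p.2))), a p.1 * a p.2 := by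
    intro q hq
    simp only [Finset.mem_Ioc] at hq
    exact per_q q (by omega) _ a
  rw [Finset.sum_congr rfl hstep, Finset.sum_add_distrib, Finset.sum_const, nsmul_eq_mul,
    ← Finset.mul_sum, switch_aux x Q hx hQ0 a]
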